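/- arXiv:2301.08017 — 2 statements merged into one kernel-verified Lean document; each statement's English description precedes it below -/
import Mathlib

section
/- (Taylor's fatness lemma.) Let k ∈ ℕ with k ≥ 1 and let Ω ⊆ ℝ² be an open set, multiply connected of order k, with finite inradius r_Ω. Let 𝒬 be an open square with side length 10(⌊√k⌋+1)·r_Ω whose sides are parallel to the coordinate axes. Then there exists a compact set Σ ⊆ closure(𝒬) \ Ω such that max{ ℋ¹(Π_{e₁}(Σ)), ℋ¹(Π_{e₂}(Σ)) } ≥ (√k/4)·r_Ω, where ℋ¹ is the 1-dimensional Hausdorff measure. -/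
/-!
Let `r = r_Ω`, `m = ⌊√k⌋` and `F = closure 𝒬 \ Ω`, and suppose both projections of `F` have
length `< (m + 1) r`. Along each side of `𝒬`, at most `m` of `2m + 2` disjoint intervals of
length `r` placed `4r` apart lie inside the projection of `F`, so we find `m + 2` coordinates,
`3r` apart, whose lines meet `𝒬` only inside `Ω`. These lines cut out `(m + 1)²` disjoint
rectangles with boundary in `Ω`, each containing a disc of radius `3r/2 > r` and hence a point
of `ℝ² \ Ω`. The boundary of each rectangle traps the component of that point in the complement
of `Ω` in the one-point compactification, so these points and `∞` lie in `(m + 1)² + 1 > k`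
different components.
-/

open MeasureTheory Metric Filter
open scoped ENNReal Topology

noncomputable section

/-- The plane `ℝ²`. -/
abbrev Plane := EuclideanSpace ℝ (Fin 2)

/-- The set of radii of open disks contained in `Ω`. -/
def inradiusSet (Ω : Set Plane) : Set ℝ :=
  { r | 0 < r ∧ ∃ x₀ ∈ Ω, ball x₀ r ⊆ Ω }

/-- The inradius `r_Ω`. -/
noncomputable def inradius (Ω : Set Plane) : ℝ := sSup (inradiusSet Ω)

/-- `Ω` is an open connected set whose complement in the one-point compactification of `ℝ²`
has exactly `k` connected components. -/
def MultiplyConnected (Ω : Set Plane) (k : ℕ) : Prop :=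
  IsOpen Ω ∧ IsConnected Ω ∧
  Nat.card (ConnectedComponents
    (↥((((fun x : Plane => (x : OnePoint Plane)) '' Ω))ᶜ))) = k

/-- The open axis-parallel square of center `c` and side length `L`. -/
def openSquare (c : Plane) (L : ℝ) : Set Plane :=
  { x : Plane | |x 0 - c 0| < L / 2 ∧ |x 1 - c 1| < L / 2 }

/-- Orthogonal projection `Π_{e₁}(x₁,x₂) = (0,x₂)`. -/
def projE1 (x : Plane) : Plane := WithLp.toLp 2 (![0, x 1] : Fin 2 → ℝ)

/-- Orthogonal projection `Π_{e₂}(x₁,x₂) = (x₁,0)`. -/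
def projE2 (x : Plane) : Plane := WithLp.toLp 2 (![x 0, 0] : Fin 2 → ℝ)

open Set Function

namespace Plane

def equivProd : Plane ≃ₜ ℝ × ℝ :=
  (EuclideanSpace.equiv (Fin 2) ℝ).toHomeomorph.trans Homeomorph.finTwoArrow

def rect (s t : Set ℝ) : Set Plane := {z | z 0 ∈ s ∧ z 1 ∈ t}

lemma rect_eq_preimage (s t : Set ℝ) : rect s t = equivProd ⁻¹' s ×ˢ t := rfl

lemma rect_mono {s s' t t' : Set ℝ} (hs : s ⊆ s') (ht : t ⊆ t') : rect s t ⊆ rect s' t' :=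
  fun _ hz => ⟨hs hz.1, ht hz.2⟩

lemma isOpen_rect {s t : Set ℝ} (hs : IsOpen s) (ht : IsOpen t) : IsOpen (rect s t) :=
  (hs.prod ht).preimage equivProd.continuous

lemma isClosed_rect {s t : Set ℝ} (hs : IsClosed s) (ht : IsClosed t) : IsClosed (rect s t) :=
  (hs.prod ht).preimage equivProd.continuous

lemma isCompact_rect {s t : Set ℝ} (hs : IsCompact s) (ht : IsCompact t) :
    IsCompact (rect s t) :=
  equivProd.isCompact_preimage.2 (hs.prod ht)

lemma closure_rect (s t : Set ℝ) : closure (rect s t) = rect (closure s) (closure t) := by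
  rw [rect_eq_preimage, ← equivProd.preimage_closure, closure_prod_eq, rect_eq_preimage]

lemma openSquare_eq_rect (c : Plane) (L : ℝ) :
    openSquare c L =
      rect (Ioo (c 0 - L / 2) (c 0 + L / 2)) (Ioo (c 1 - L / 2) (c 1 + L / 2)) := by
  ext z
  simp only [openSquare, rect, mem_ofPred_eq, mem_Ioo, abs_sub_lt_iff]
  constructor <;> rintro ⟨⟨h1, h2⟩, h3, h4⟩ <;> refine ⟨⟨?_, ?_⟩, ?_, ?_⟩ <;> linarith

lemma closure_openSquare (c : Plane) {L : ℝ} (hL : 0 < L) :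
    closure (openSquare c L) =
      rect (Icc (c 0 - L / 2) (c 0 + L / 2)) (Icc (c 1 - L / 2) (c 1 + L / 2)) := by
  rw [openSquare_eq_rect, closure_rect, closure_Ioo (by linarith), closure_Ioo (by linarith)]

lemma ball_subset_rect (z : Plane) (ρ : ℝ) :
    ball z ρ ⊆ rect (Ioo (z 0 - ρ) (z 0 + ρ)) (Ioo (z 1 - ρ) (z 1 + ρ)) := by
  intro w hw
  have h (i : Fin 2) : w i ∈ Ioo (z i - ρ) (z i + ρ) := by
    rw [← Real.ball_eq_Ioo]
    exact (PiLp.dist_apply_le w z i).trans_lt hw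
  exact ⟨h 0, h 1⟩

end Plane

lemma isometry_euclideanSpace_single {ι : Type*} [Fintype ι] [DecidableEq ι] (i : ι) :
    Isometry (EuclideanSpace.single i : ℝ → EuclideanSpace ℝ ι) :=
  Isometry.of_dist_eq (PiLp.dist_single_same 2 (fun _ => ℝ) i)

lemma hausdorffMeasure_projE1_image (S : Set Plane) :
    μH[1] (projE1 '' S) = volume ((· 1) '' S) := by
  have : projE1 = EuclideanSpace.single 1 ∘ (· 1) := by
    ext z i; fin_cases i <;> simp [projE1]
  rw [this, image_comp, (isometry_euclideanSpace_single 1).hausdorffMeasure_image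
    (.inl zero_le_one), hausdorffMeasure_real]

lemma hausdorffMeasure_projE2_image (S : Set Plane) :
    μH[1] (projE2 '' S) = volume ((· 0) '' S) := by
  have : projE2 = EuclideanSpace.single 0 ∘ (· 0) := by
    ext z i; fin_cases i <;> simp [projE2]
  rw [this, image_comp, (isometry_euclideanSpace_single 0).hausdorffMeasure_image
    (.inl zero_le_one), hausdorffMeasure_real]

lemma card_mul_le_measure_of_subset {α ι : Type*} [MeasurableSpace α] {μ : Measure α}
    {A : ι → Set α} {s : Finset ι} {X : Set α} {ν : ℝ≥0∞}
    (hd : (s : Set ι).PairwiseDisjoint A) (hm : ∀ i ∈ s, MeasurableSet (A i))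
    (hν : ∀ i ∈ s, μ (A i) = ν) (hX : ∀ i ∈ s, A i ⊆ X) :
    s.card * ν ≤ μ X :=
  calc s.card * ν = ∑ i ∈ s, μ (A i) := by
        rw [Finset.sum_congr rfl hν, Finset.sum_const, nsmul_eq_mul]
    _ = μ (⋃ i ∈ s, A i) := (measure_biUnion_finset hd hm).symm
    _ ≤ μ X := measure_mono (iUnion₂_subset hX)

lemma exists_separated_points_notMem (X : Set ℝ) {r : ℝ} (hr : 0 < r) (m : ℕ)
    (hX : volume X < ENNReal.ofReal ((m + 1) * r)) (α : ℝ) :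
    ∃ t : Fin (m + 2) → ℝ, (∀ i, t i ∈ Icc α (α + (8 * m + 5) * r) \ X) ∧
      ∀ i j, i < j → t i + 3 * r ≤ t j := by
  classical
  set J : ℕ → Set ℝ := fun n => Icc (α + 4 * r * n) (α + 4 * r * n + r)
  have hJ : Pairwise (Disjoint on J) := by
    intro p q hpq
    wlog h : p < q generalizing p q
    · exact (this hpq.symm (hpq.lt_or_gt.resolve_left h)).symm
    have : (p : ℝ) + 1 ≤ q := by exact_mod_cast h
    refine Set.disjoint_left.2 fun x hp hq => ?_
    nlinarith [hp.2, hq.1]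
  set N := Finset.range (2 * m + 2)
  have hbad : (N.filter (fun n => J n ⊆ X)).card ≤ m := by
    have hle := card_mul_le_measure_of_subset (μ := volume) (ν := ENNReal.ofReal r)
      (hJ.set_pairwise (N.filter (fun n => J n ⊆ X))) (fun _ _ => measurableSet_Icc)
      (fun n _ => by simp [J, Real.volume_Icc]) (fun n hn => (Finset.mem_filter.1 hn).2)
    rw [← ENNReal.ofReal_natCast, ← ENNReal.ofReal_mul (by positivity)] at hle
    have := (ENNReal.ofReal_lt_ofReal_iff (by positivity)).1 (hle.trans_lt hX)
    have : ((N.filter (fun n => J n ⊆ X)).card : ℝ) < m + 1 := lt_of_mul_lt_mul_right this hr.le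
    exact_mod_cast Nat.lt_succ_iff.1 (by exact_mod_cast this)
  have hgood : m + 2 ≤ (N.filter (fun n => ¬ J n ⊆ X)).card := by
    have := Finset.card_filter_add_card_filter_not (s := N) (p := fun n => J n ⊆ X)
    have hN : N.card = 2 * m + 2 := Finset.card_range _
    omega
  obtain ⟨g, hgN, hg⟩ := Finset.exists_subset_card_eq hgood
  set f := g.orderEmbOfFin hg
  have hf (i) : f i ∈ N.filter (fun n => ¬ J n ⊆ X) := hgN (g.orderEmbOfFin_mem hg i)
  choose t htJ htX using fun i => not_subset.1 (Finset.mem_filter.1 (hf i)).2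
  refine ⟨t, fun i => ⟨?_, htX i⟩, fun i j hij => ?_⟩
  · have : (f i : ℝ) + 1 ≤ 2 * m + 2 := by
      exact_mod_cast Finset.mem_range.1 (Finset.mem_filter.1 (hf i)).1
    constructor <;> nlinarith [(htJ i).1, (htJ i).2]
  · have : (f i : ℝ) + 1 ≤ f j := by exact_mod_cast f.strictMono hij
    nlinarith [(htJ i).2, (htJ j).1]

namespace OnePoint

variable {X : Type*} [TopologicalSpace X]

lemma connectedComponentIn_compl_image_subset {Ω K U : Set X} (hK : IsCompact K)
    (hKc : IsClosed K) (hU : IsOpen U) (hUK : U ⊆ K) (hΩ : K \ U ⊆ Ω) {q : X} (hq : q ∈ U)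
    (hqΩ : q ∉ Ω) :
    connectedComponentIn (((↑) : X → OnePoint X) '' Ω)ᶜ q ⊆ (↑) '' U := by
  refine isPreconnected_connectedComponentIn.subset_left_of_subset_union
    (isOpen_image_coe.2 hU) (isClosed_image_coe.2 ⟨hKc, hK⟩).isOpen_compl
    (disjoint_compl_right_iff_subset.2 (image_mono hUK))
    ((connectedComponentIn_subset _ _).trans ?_)
    ⟨q, mem_connectedComponentIn (mt coe_injective.mem_set_image.1 hqΩ), q, hq, rfl⟩
  intro z hz
  induction z using OnePoint.rec with
  | infty => exact Or.inr fun ⟨y, _, hy⟩ => coe_ne_infty y hy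
  | coe x =>
    rw [mem_compl_iff, coe_injective.mem_set_image] at hz
    by_cases hxK : x ∈ K
    · exact Or.inl ⟨x, by_contra fun hxU => hz (hΩ ⟨hxK, hxU⟩), rfl⟩
    · exact Or.inr (mt coe_injective.mem_set_image.1 hxK)

theorem card_lt_card_connectedComponents_compl_image {ι : Type*} [Finite ι] {Ω : Set X}
    {K U : ι → Set X} (hK : ∀ i, IsCompact (K i)) (hKc : ∀ i, IsClosed (K i))
    (hU : ∀ i, IsOpen (U i)) (hUK : ∀ i, U i ⊆ K i) (hΩ : ∀ i, K i \ U i ⊆ Ω)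
    (hdisj : Pairwise (Disjoint on U)) {q : ι → X} (hq : ∀ i, q i ∈ U i) (hqΩ : ∀ i, q i ∉ Ω)
    [Finite (ConnectedComponents ↥(((↑) : X → OnePoint X) '' Ω)ᶜ)] :
    Nat.card ι < Nat.card (ConnectedComponents ↥(((↑) : X → OnePoint X) '' Ω)ᶜ) := by
  set C := (((↑) : X → OnePoint X) '' Ω)ᶜ
  have hqC (i) : (q i : OnePoint X) ∈ C := mt coe_injective.mem_set_image.1 (hqΩ i)
  have hinfty : (∞ : OnePoint X) ∈ C := fun ⟨x, _, hx⟩ => coe_ne_infty x hx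
  let g : Option ι → ConnectedComponents C :=
    fun o => o.elim (.mk ⟨∞, hinfty⟩) fun i => .mk ⟨q i, hqC i⟩
  have htrapped (i) (z : C) (h : g (some i) = .mk z) : (z : OnePoint X) ∈ (↑) '' U i := by
    refine connectedComponentIn_compl_image_subset (hK i) (hKc i) (hU i) (hUK i) (hΩ i) (hq i)
      (hqΩ i) ?_
    rw [connectedComponentIn_eq_image (hqC i)]
    exact mem_image_of_mem _ (ConnectedComponents.coe_eq_coe'.1 h.symm)
  have hg : Injective g := by
    rintro (_ | i) (_ | j) h
    · rfl
    · obtain ⟨x, -, hx⟩ := htrapped j _ h.symm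
      exact absurd hx (coe_ne_infty x)
    · obtain ⟨x, -, hx⟩ := htrapped i _ h
      exact absurd hx (coe_ne_infty x)
    · obtain ⟨x, hx, hxq⟩ := htrapped i _ h
      rw [coe_injective hxq] at hx
      by_contra hij
      exact (hdisj (mt (congrArg some) hij)).notMem_of_mem_left hx (hq j)
  simpa [Finite.card_option] using Nat.card_le_card_of_injective g hg

end OnePoint

lemma Fin.pairwise_disjoint_Ioo_castSucc_succ {α : Type*} [Preorder α] {n : ℕ}
    {t : Fin (n + 1) → α} (ht : Monotone t) :
    Pairwise (Disjoint on fun i : Fin n => Ioo (t i.castSucc) (t i.succ)) := by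
  intro i j hij
  wlog h : i < j generalizing i j
  · exact (this hij.symm (hij.lt_or_gt.resolve_left h)).symm
  exact Set.disjoint_left.2 fun z hzi hzj =>
    (hzi.2.trans_le (ht (Fin.succ_le_castSucc_iff.2 h))).not_gt hzj.1

namespace Plane

lemma disjoint_rect {s s' t t' : Set ℝ} (h : Disjoint s s' ∨ Disjoint t t') :
    Disjoint (rect s t) (rect s' t') :=
  (disjoint_prod.2 h).preimage equivProd

lemma le_inradius_of_ball_subset {Ω : Set Plane} (hfin : BddAbove (inradiusSet Ω)) {x : Plane}
    {ρ : ℝ} (hρ : 0 < ρ) (h : ball x ρ ⊆ Ω) : ρ ≤ inradius Ω :=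
  le_csSup hfin ⟨hρ, x, h (mem_ball_self hρ), h⟩

lemma inradius_pos {Ω : Set Plane} (hΩ : IsOpen Ω) (hne : Ω.Nonempty)
    (hfin : BddAbove (inradiusSet Ω)) : 0 < inradius Ω := by
  obtain ⟨x, hx⟩ := hne
  obtain ⟨ε, hε, hball⟩ := Metric.isOpen_iff.1 hΩ x hx
  exact hε.trans_le (le_inradius_of_ball_subset hfin hε hball)

lemma exists_mem_rect_Ioo_notMem {Ω : Set Plane} (hfin : BddAbove (inradiusSet Ω))
    (hr : 0 < inradius Ω) {a b a' b' : ℝ} (h : a + 3 * inradius Ω ≤ b)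
    (h' : a' + 3 * inradius Ω ≤ b') : ∃ q ∈ rect (Ioo a b) (Ioo a' b'), q ∉ Ω := by
  by_contra! hsub
  set z : Plane := !₂[(a + b) / 2, (a' + b') / 2]
  have hball : ball z (3 * inradius Ω / 2) ⊆ Ω := by
    refine (ball_subset_rect z _).trans (subset_trans (rect_mono ?_ ?_) hsub)
    all_goals exact Ioo_subset_Ioo (by simp [z]; linarith) (by simp [z]; linarith)
  linarith [le_inradius_of_ball_subset hfin (by positivity) hball]

lemma rect_Icc_diff_rect_Ioo_subset {Ω B : Set Plane} {a b a' b' : ℝ}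
    (hB : rect (Icc a b) (Icc a' b') ⊆ B)
    (ha : a ∉ (· 0) '' (B \ Ω)) (hb : b ∉ (· 0) '' (B \ Ω))
    (ha' : a' ∉ (· 1) '' (B \ Ω)) (hb' : b' ∉ (· 1) '' (B \ Ω)) :
    rect (Icc a b) (Icc a' b') \ rect (Ioo a b) (Ioo a' b') ⊆ Ω := by
  rintro z ⟨hzK, hzU⟩
  by_contra hzΩ
  have hzF : z ∈ B \ Ω := ⟨hB hzK, hzΩ⟩
  exact hzU ⟨⟨hzK.1.1.lt_of_ne fun h => ha ⟨z, hzF, h.symm⟩,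
      hzK.1.2.lt_of_ne fun h => hb ⟨z, hzF, h⟩⟩,
    hzK.2.1.lt_of_ne fun h => ha' ⟨z, hzF, h.symm⟩, hzK.2.2.lt_of_ne fun h => hb' ⟨z, hzF, h⟩⟩

theorem succ_sq_lt_card_connectedComponents_of_volume_lt {Ω : Set Plane}
    (hfin : BddAbove (inradiusSet Ω)) (hr : 0 < inradius Ω) (m : ℕ) {a b a' b' : ℝ}
    (hab : a + (8 * m + 5) * inradius Ω ≤ b)
    (ha'b' : a' + (8 * m + 5) * inradius Ω ≤ b')
    (hX : volume ((· 0) '' (rect (Icc a b) (Icc a' b') \ Ω)) <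
      ENNReal.ofReal ((m + 1) * inradius Ω))
    (hY : volume ((· 1) '' (rect (Icc a b) (Icc a' b') \ Ω)) <
      ENNReal.ofReal ((m + 1) * inradius Ω))
    [Finite (ConnectedComponents ↥(((↑) : Plane → OnePoint Plane) '' Ω)ᶜ)] :
    (m + 1) ^ 2 < Nat.card (ConnectedComponents ↥(((↑) : Plane → OnePoint Plane) '' Ω)ᶜ) := by
  obtain ⟨x, hxF, hx⟩ := exists_separated_points_notMem _ hr m hX a
  obtain ⟨y, hyF, hy⟩ := exists_separated_points_notMem _ hr m hY a'
  have hxmono : Monotone x := monotone_iff_forall_lt.2 fun i j h => by linarith [hx i j h]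
  have hymono : Monotone y := monotone_iff_forall_lt.2 fun i j h => by linarith [hy i j h]
  choose q hqU hqΩ using fun p : Fin (m + 1) × Fin (m + 1) =>
    exists_mem_rect_Ioo_notMem hfin hr (hx _ _ p.1.castSucc_lt_succ)
      (hy _ _ p.2.castSucc_lt_succ)
  have hcard := OnePoint.card_lt_card_connectedComponents_compl_image
    (K := fun p => rect (Icc (x p.1.castSucc) (x p.1.succ)) (Icc (y p.2.castSucc) (y p.2.succ)))
    (fun _ => isCompact_rect isCompact_Icc isCompact_Icc)
    (fun _ => isClosed_rect isClosed_Icc isClosed_Icc)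
    (fun _ => isOpen_rect isOpen_Ioo isOpen_Ioo)
    (fun _ => rect_mono Ioo_subset_Icc_self Ioo_subset_Icc_self)
    (fun p => rect_Icc_diff_rect_Ioo_subset
      (rect_mono (Icc_subset_Icc (hxF _).1.1 ((hxF _).1.2.trans hab))
        (Icc_subset_Icc (hyF _).1.1 ((hyF _).1.2.trans ha'b')))
      (hxF _).2 (hxF _).2 (hyF _).2 (hyF _).2)
    (fun p p' hpp' => disjoint_rect <| by
      rcases ne_or_eq p.1 p'.1 with h | h
      · exact .inl (Fin.pairwise_disjoint_Ioo_castSucc_succ hxmono h)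
      · exact .inr (Fin.pairwise_disjoint_Ioo_castSucc_succ hymono
          fun h' => hpp' (Prod.ext h h')))
    hqU hqΩ
  simpa [sq] using hcard

end Plane

/-- Taylor's fatness lemma: if `Ω ⊆ ℝ²` is multiply connected of order `k` with finite inradius
and `𝒬` is an open axis-parallel square of side length `10(⌊√k⌋+1) r_Ω`, then there is a compact
set `Σ ⊆ closure 𝒬 \ Ω` whose projection on one of the coordinate axes has `ℋ¹`-measure at least
`(√k/4) r_Ω`. -/
theorem taylor_fatness (k : ℕ) (hk : 1 ≤ k) (Ω : Set Plane)
    (hΩ : MultiplyConnected Ω k) (hfin : BddAbove (inradiusSet Ω))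
    (c : Plane) :
    ∃ S : Set Plane, IsCompact S ∧
      S ⊆ closure (openSquare c (10 * ((⌊Real.sqrt k⌋₊ : ℝ) + 1) * inradius Ω)) \ Ω ∧
      ENNReal.ofReal (Real.sqrt k / 4 * inradius Ω) ≤
        max (μH[1] (projE1 '' S)) (μH[1] (projE2 '' S)) := by
  obtain ⟨hΩopen, hΩconn, hcard⟩ := hΩ
  have hr := Plane.inradius_pos hΩopen hΩconn.nonempty hfin
  set r := inradius Ω
  set m := ⌊Real.sqrt k⌋₊ with hm
  have hL : (8 * m + 5) * r ≤ 10 * ((m : ℝ) + 1) * r := by nlinarith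
  rw [Plane.closure_openSquare c (by positivity)]
  refine ⟨_, (Plane.isCompact_rect isCompact_Icc isCompact_Icc).diff hΩopen, subset_rfl, ?_⟩
  rw [hausdorffMeasure_projE1_image, hausdorffMeasure_projE2_image]
  by_contra! hsmall
  have hW : ENNReal.ofReal (Real.sqrt k / 4 * r) ≤ ENNReal.ofReal ((m + 1) * r) :=
    ENNReal.ofReal_le_ofReal <| by
      nlinarith [Nat.lt_floor_add_one (Real.sqrt k), Real.sqrt_nonneg k]
  have : Finite (ConnectedComponents ↥(((↑) : Plane → OnePoint Plane) '' Ω)ᶜ) :=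
    Nat.finite_of_card_ne_zero (by rw [hcard]; omega)
  have hlt := Plane.succ_sq_lt_card_connectedComponents_of_volume_lt hfin hr m
    (by linarith) (by linarith) ((max_lt_iff.1 hsmall).2.trans_le hW)
    ((max_lt_iff.1 hsmall).1.trans_le hW)
  rw [hcard, hm, Real.nat_floor_real_sqrt_eq_nat_sqrt] at hlt
  nlinarith [Nat.lt_succ_sqrt k]
end
end

section
/- Let K ⊆ ℝ^N be an open bounded convex set and x₀ ∈ K; set d_K(x₀) = min_{x∈∂K} |x−x₀|, D_K(x₀) = max_{x∈∂K} |x−x₀|, L_K = 2/d_K(x₀) and M_K = D_K(x₀)·(2 + D_K(x₀)/d_K(x₀)). There exists a bijection Φ : ℝ^N → ℝ^N such that: Φ(x₀) = x₀; Φ maps r(K−x₀)+x₀ onto the open ball B_r(x₀) for every r > 0; Φ is Lipschitz continuous with Lipschitz constant L_K; Φ^{−1} is Lipschitz continuous with Lipschitz constant M_K; and, for almost every x ∈ ℝ^N, (1/M_K)^N ≤ |det ∇Φ(x)| ≤ (L_K)^N and (1/L_K)^N ≤ |det ∇Φ^{−1}(x)| ≤ (M_K)^N. -/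
/-!
Put `x₀ = 0` and let `g` be the gauge of `K`. The map `Φ v = (g v / ‖v‖) • v` (Mathlib's
`gaugeRescale K (ball 0 1)`) sends each level set `{g = t}` to the sphere of radius `t`, hence
`t • K` onto `B_t`; its inverse is `Ψ w = (‖w‖ / g w) • w`. Since `B_d ⊆ K ⊆ B̄_D`, the gauge is
`1/d`-Lipschitz with `‖v‖/D ≤ g v ≤ ‖v‖/d`, and this gives the Lipschitz constants `2/d` of `Φ` and
`D (2 + D/d)` of `Ψ`. Each map is then anti-Lipschitz with the other's constant, so where it is
differentiable (a.e., by Rademacher) its differential `A` has `‖A‖ ≤ L` and `‖A⁻¹‖ ≤ M`. Comparing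
the volume of `A (ball)` with that of a ball gives `|det A| ≤ ‖A‖ ^ N`; applied to `A⁻¹` this gives
the lower bound.
-/

open MeasureTheory Metric
open scoped ENNReal

noncomputable section

/-- Euclidean space `ℝ^N`. -/
abbrev Spc (N : ℕ) := EuclideanSpace ℝ (Fin N)

/-- `d_K(x₀) = min_{x ∈ ∂K} |x - x₀|`. -/
noncomputable def dK (N : ℕ) (K : Set (Spc N)) (x₀ : Spc N) : ℝ :=
  Metric.infDist x₀ (frontier K)

/-- `D_K(x₀) = max_{x ∈ ∂K} |x - x₀|`. -/
noncomputable def DK (N : ℕ) (K : Set (Spc N)) (x₀ : Spc N) : ℝ :=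
  sSup ((fun x => dist x x₀) '' frontier K)

open Filter Module
open scoped NNReal RealInnerProductSpace Topology Pointwise

theorem IsPreconnected.subset_of_disjoint_frontier {X : Type*} [TopologicalSpace X] {s K : Set X}
    (hs : IsPreconnected s) (hK : IsOpen K) (hsK : (s ∩ K).Nonempty)
    (hfr : Disjoint s (frontier K)) : s ⊆ K :=
  hs.subset_of_closure_inter_subset hK hsK fun z ⟨hzc, hzs⟩ => by
    by_contra hzK
    exact hfr.ne_of_mem hzs ⟨hzc, by rwa [hK.interior_eq]⟩ rfl

section Frontier

variable {E : Type*} [NormedAddCommGroup E] [NormedSpace ℝ E] {K : Set E} {x₀ : E}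

theorem ball_infDist_frontier_subset (hK : IsOpen K) (hx₀ : x₀ ∈ K) :
    ball x₀ (infDist x₀ (frontier K)) ⊆ K := by
  rcases (infDist_nonneg (x := x₀) (s := frontier K)).eq_or_lt with h | h
  · simp [← h]
  exact (convex_ball x₀ _).isPreconnected.subset_of_disjoint_frontier hK
    ⟨x₀, mem_ball_self h, hx₀⟩ (Set.subset_compl_iff_disjoint_right.1 ball_infDist_subset_compl)

theorem infDist_frontier_pos [Nontrivial E] (hK : IsOpen K) (hKb : Bornology.IsBounded K)
    (hx₀ : x₀ ∈ K) : 0 < infDist x₀ (frontier K) := by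
  have hne : (frontier K).Nonempty :=
    nonempty_frontier_iff.2 ⟨⟨x₀, hx₀⟩, fun h => NormedSpace.unbounded_univ ℝ E (h ▸ hKb)⟩
  refine (isClosed_frontier.notMem_iff_infDist_pos hne).1 fun h => h.2 ?_
  rwa [hK.interior_eq]

theorem exists_mem_frontier_dist_le (hK : IsOpen K) (hKb : Bornology.IsBounded K) {x : E}
    (hx : x ∈ K) (hne : x ≠ x₀) : ∃ z ∈ frontier K, dist x x₀ ≤ dist z x₀ := by
  set ray : ℝ → E := fun t => x₀ + t • (x - x₀)
  have hdist : ∀ t, 0 ≤ t → dist (ray t) x₀ = t * dist x x₀ := fun t ht => by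
    simp [ray, dist_eq_norm, norm_smul, abs_of_nonneg ht]
  obtain ⟨R, hR⟩ := hKb.subset_closedBall x₀
  obtain ⟨t, htR, ht1⟩ := (((tendsto_id.atTop_mul_const (dist_pos.2 hne)).eventually_gt_atTop R).and
    (eventually_ge_atTop 1)).exists
  have hout : ray t ∉ K := fun h => by
    have := mem_closedBall.1 (hR h)
    rw [hdist t (by linarith)] at this
    simp only [id] at htR
    linarith
  by_contra! hfar
  have hray : IsPreconnected (ray '' Set.Ici 1) :=
    isPreconnected_Ici.image ray (by fun_prop)
  refine hout (hray.subset_of_disjoint_frontier hK ⟨x, ⟨1, Set.mem_Ici.2 le_rfl, by simp [ray]⟩, hx⟩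
    ?_ ⟨t, ht1, rfl⟩)
  rw [Set.disjoint_left]
  rintro - ⟨s, hs, rfl⟩ hz
  have := hfar _ hz
  rw [hdist s (by linarith [Set.mem_Ici.1 hs])] at this
  nlinarith [Set.mem_Ici.1 hs, dist_nonneg (x := x) (y := x₀)]

theorem subset_closedBall_sSup_dist_frontier (hK : IsOpen K) (hKb : Bornology.IsBounded K) :
    K ⊆ closedBall x₀ (sSup ((fun x => dist x x₀) '' frontier K)) := by
  have hbdd : BddAbove ((fun x => dist x x₀) '' frontier K) := by
    obtain ⟨R, hR⟩ := (hKb.closure.subset frontier_subset_closure).subset_closedBall x₀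
    exact ⟨R, by rintro - ⟨z, hz, rfl⟩; exact hR hz⟩
  intro x hx
  rcases eq_or_ne x x₀ with rfl | hne
  · exact mem_closedBall_self (Real.sSup_nonneg (by rintro - ⟨z, -, rfl⟩; exact dist_nonneg))
  obtain ⟨z, hz, hxz⟩ := exists_mem_frontier_dist_le hK hKb hx hne
  exact hxz.trans (le_csSup hbdd ⟨z, hz, rfl⟩)

end Frontier

section GaugeRescale

variable {E : Type*} [NormedAddCommGroup E] [NormedSpace ℝ E] {s : Set E} {d D : ℝ}

theorem gaugeRescale_unitBall_right_apply (s : Set E) (v : E) :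
    gaugeRescale s (ball 0 1) v = (gauge s v / ‖v‖) • v := by
  rw [gaugeRescale, gauge_unit_ball]

theorem gaugeRescale_unitBall_left_apply (s : Set E) (v : E) :
    gaugeRescale (ball 0 1) s v = (‖v‖ / gauge s v) • v := by
  rw [gaugeRescale, gauge_unit_ball]

theorem image_gaugeRescale_unitBall_right (hs : Convex ℝ s) (hso : IsOpen s) (hs₀ : (0 : E) ∈ s)
    (hsb : Bornology.IsBounded s) : gaugeRescale s (ball 0 1) '' s = ball 0 1 := by
  have := image_gaugeRescaleHomeomorph_interior hs (hso.mem_nhds hs₀)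
    (NormedSpace.isVonNBounded_of_isBounded ℝ hsb) (convex_ball 0 1) (ball_mem_nhds 0 one_pos)
    (NormedSpace.isVonNBounded_ball ℝ E 1)
  rwa [hso.interior_eq, isOpen_ball.interior_eq] at this

theorem abs_gauge_sub_le (hs : Convex ℝ s) (hd : 0 < d) (hsd : ball 0 d ⊆ s) (u v : E) :
    |gauge s u - gauge s v| ≤ ‖u - v‖ / d := by
  have := (hs.lipschitzWith_gauge (Real.toNNReal_pos.2 hd)
    (by rwa [Real.coe_toNNReal _ hd.le])).dist_le_mul u v
  rwa [Real.dist_eq, dist_eq_norm, NNReal.coe_inv, Real.coe_toNNReal _ hd.le,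
    inv_mul_eq_div] at this

theorem gauge_le_norm_div (hd : 0 < d) (hsd : ball 0 d ⊆ s) (v : E) : gauge s v ≤ ‖v‖ / d := by
  rw [le_div_iff₀ hd, mul_comm]
  exact mul_gauge_le_norm hsd

theorem lipschitzWith_gaugeRescale_unitBall_left (hs : Convex ℝ s) (hd : 0 < d) (hD : 0 < D)
    (hsd : ball 0 d ⊆ s) (hsD : s ⊆ closedBall 0 D) :
    LipschitzWith (D * (2 + D / d)).toNNReal (gaugeRescale (ball (0 : E) 1) s) := by
  set ρ : E → ℝ := fun w => ‖w‖ / gauge s w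
  have hnorm_le : ∀ w, ‖w‖ ≤ D * gauge s w := fun w => by
    rw [← div_le_iff₀' hD]
    exact le_gauge_of_subset_closedBall ((absorbent_ball_zero hd).mono hsd) hD.le hsD
  have hρ_nonneg : ∀ w, 0 ≤ ρ w := fun w => div_nonneg (norm_nonneg w) (gauge_nonneg w)
  have hρ_le : ∀ w, ρ w ≤ D := fun w => div_le_of_le_mul₀ (gauge_nonneg w) hD.le (hnorm_le w)
  have hρ_mul : ∀ w, ρ w * gauge s w = ‖w‖ := fun w => by
    rcases eq_or_ne w 0 with rfl | hw
    · simp [ρ]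
    have : 0 < gauge s w := pos_of_mul_pos_right ((norm_pos_iff.2 hw).trans_le (hnorm_le w)) hD.le
    exact div_mul_cancel₀ _ this.ne'
  refine LipschitzWith.of_dist_le' fun u v => ?_
  simp only [dist_eq_norm, gaugeRescale_unitBall_left_apply]
  have hsplit : ρ u • u - ρ v • v = ρ u • (u - v) + (ρ u - ρ v) • v := by module
  have hdiff : |ρ u - ρ v| * ‖v‖ ≤ (D * (D / d) + D) * ‖u - v‖ := by
    rcases eq_or_ne v 0 with rfl | hv
    · simp only [norm_zero, mul_zero]; positivity
    have hq : 0 < gauge s v :=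
      pos_of_mul_pos_right ((norm_pos_iff.2 hv).trans_le (hnorm_le v)) hD.le
    have hid : (ρ u - ρ v) * ‖v‖ = (ρ u * (gauge s v - gauge s u) + (‖u‖ - ‖v‖)) * ρ v := by
      linear_combination ρ v * hρ_mul u - ρ u * hρ_mul v
    have hnum : |ρ u * (gauge s v - gauge s u) + (‖u‖ - ‖v‖)| ≤ D * (‖u - v‖ / d) + ‖u - v‖ := by
      refine (abs_add_le _ _).trans (add_le_add ?_ (abs_norm_sub_norm_le u v))
      rw [abs_mul, abs_of_nonneg (hρ_nonneg u), abs_sub_comm]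
      exact mul_le_mul (hρ_le u) (abs_gauge_sub_le hs hd hsd u v) (abs_nonneg _) hD.le
    calc |ρ u - ρ v| * ‖v‖ = |ρ u * (gauge s v - gauge s u) + (‖u‖ - ‖v‖)| * ρ v := by
          rw [← abs_norm v, ← abs_mul, hid, abs_mul, abs_of_nonneg (hρ_nonneg v), abs_norm]
      _ ≤ (D * (‖u - v‖ / d) + ‖u - v‖) * D :=
          mul_le_mul hnum (hρ_le v) (hρ_nonneg v) (by positivity)
      _ = (D * (D / d) + D) * ‖u - v‖ := by ring
  calc ‖ρ u • u - ρ v • v‖ ≤ ρ u * ‖u - v‖ + |ρ u - ρ v| * ‖v‖ := by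
        rw [hsplit]
        refine (norm_add_le _ _).trans_eq ?_
        rw [norm_smul, norm_smul, Real.norm_eq_abs, Real.norm_eq_abs,
          abs_of_nonneg (hρ_nonneg u)]
    _ ≤ D * ‖u - v‖ + (D * (D / d) + D) * ‖u - v‖ :=
        add_le_add (mul_le_mul_of_nonneg_right (hρ_le u) (norm_nonneg _)) hdiff
    _ = D * (2 + D / d) * ‖u - v‖ := by ring

end GaugeRescale

section InnerProduct

variable {E : Type*} [NormedAddCommGroup E] [InnerProductSpace ℝ E] {s : Set E} {d : ℝ}

theorem norm_smul_div_norm_sub_le {u v : E} (h : ‖v‖ ≤ ‖u‖) : ‖(‖v‖ / ‖u‖) • u - v‖ ≤ ‖u - v‖ := by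
  rcases (norm_nonneg u).eq_or_lt with hu | hu
  · have : v = 0 := norm_le_zero_iff.1 (hu ▸ h)
    simp [this]
  have hinner : ⟪u, v⟫ ≤ ‖u‖ * ‖v‖ := real_inner_le_norm u v
  rw [← sq_le_sq₀ (norm_nonneg _) (norm_nonneg _), norm_sub_sq_real, norm_sub_sq_real,
    norm_smul, real_inner_smul_left, Real.norm_of_nonneg (by positivity)]
  have key : (‖v‖ / ‖u‖ * ‖u‖) ^ 2 - 2 * (‖v‖ / ‖u‖ * ⟪u, v⟫) + ‖v‖ ^ 2
      = ‖u‖ ^ 2 - 2 * ⟪u, v⟫ + ‖v‖ ^ 2 - (‖u‖ - ‖v‖) / ‖u‖ * (‖u‖ * (‖u‖ + ‖v‖) - 2 * ⟪u, v⟫) := by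
    field_simp; ring
  rw [key]
  have : 0 ≤ (‖u‖ - ‖v‖) / ‖u‖ * (‖u‖ * (‖u‖ + ‖v‖) - 2 * ⟪u, v⟫) :=
    mul_nonneg (div_nonneg (by linarith) hu.le) (by nlinarith [norm_nonneg v])
  linarith

theorem lipschitzWith_gaugeRescale_unitBall_right (hs : Convex ℝ s) (hd : 0 < d)
    (hsd : ball 0 d ⊆ s) : LipschitzWith (2 / d).toNNReal (gaugeRescale s (ball (0 : E) 1)) := by
  suffices h : ∀ u v : E, ‖v‖ ≤ ‖u‖ →
      ‖gaugeRescale s (ball 0 1) u - gaugeRescale s (ball 0 1) v‖ ≤ 2 / d * ‖u - v‖ by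
    refine LipschitzWith.of_dist_le' fun u v => ?_
    rw [dist_eq_norm, dist_eq_norm]
    rcases le_total ‖v‖ ‖u‖ with huv | hvu
    · exact h u v huv
    · rw [norm_sub_rev, norm_sub_rev u]
      exact h v u hvu
  intro u v huv
  rcases eq_or_ne u 0 with rfl | hu
  · simp [norm_le_zero_iff.1 (norm_zero (E := E) ▸ huv)]
  have hu' : 0 < ‖u‖ := norm_pos_iff.2 hu
  simp only [gaugeRescale_unitBall_right_apply]
  have hsplit : (gauge s u / ‖u‖) • u - (gauge s v / ‖v‖) • v
      = ((gauge s u - gauge s v) / ‖u‖) • u + (gauge s v / ‖v‖) • ((‖v‖ / ‖u‖) • u - v) := by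
    rcases eq_or_ne v 0 with rfl | hv
    · simp
    rw [smul_sub, smul_smul, div_mul_div_cancel₀ (norm_ne_zero_iff.2 hv)]
    module
  have hfirst : ‖((gauge s u - gauge s v) / ‖u‖) • u‖ ≤ ‖u - v‖ / d := by
    rw [norm_smul, Real.norm_eq_abs, abs_div, abs_norm, div_mul_cancel₀ _ hu'.ne']
    exact abs_gauge_sub_le hs hd hsd u v
  have hratio : gauge s v / ‖v‖ ≤ 1 / d :=
    div_le_of_le_mul₀ (norm_nonneg v) (by positivity)
      (by simpa [div_eq_inv_mul] using gauge_le_norm_div hd hsd v)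
  have hsecond : ‖(gauge s v / ‖v‖) • ((‖v‖ / ‖u‖) • u - v)‖ ≤ 1 / d * ‖u - v‖ := by
    rw [norm_smul, Real.norm_of_nonneg (div_nonneg (gauge_nonneg v) (norm_nonneg v))]
    exact mul_le_mul hratio (norm_smul_div_norm_sub_le huv) (norm_nonneg _) (by positivity)
  calc _ ≤ _ := hsplit ▸ norm_add_le _ _
    _ ≤ ‖u - v‖ / d + 1 / d * ‖u - v‖ := add_le_add hfirst hsecond
    _ = 2 / d * ‖u - v‖ := by ring

end InnerProduct

theorem LipschitzWith.const_add_comp_sub_const {E : Type*} [SeminormedAddCommGroup E] {K : ℝ≥0}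
    {f : E → E} (hf : LipschitzWith K f) (a : E) : LipschitzWith K (fun x => a + f (x - a)) :=
  LipschitzWith.of_dist_le_mul fun x y => by
    simpa only [dist_add_left, dist_sub_right] using hf.dist_le_mul (x - a) (y - a)

theorem Convex.exists_lipschitzWith_image_eq_ball {E : Type*} [NormedAddCommGroup E]
    [InnerProductSpace ℝ E] {K : Set E} {x₀ : E} {d D : ℝ} (hKconv : Convex ℝ K)
    (hKopen : IsOpen K) (hd : 0 < d) (hD : 0 < D) (hball : ball x₀ d ⊆ K)
    (hclosedBall : K ⊆ closedBall x₀ D) :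
    ∃ Φ Ψ : E → E, Function.LeftInverse Ψ Φ ∧ Function.RightInverse Ψ Φ ∧ Φ x₀ = x₀ ∧
      (∀ r : ℝ, 0 < r → Φ '' ((fun x => r • (x - x₀) + x₀) '' K) = ball x₀ r) ∧
      LipschitzWith (2 / d).toNNReal Φ ∧ LipschitzWith (D * (2 + D / d)).toNNReal Ψ := by
  set C := (fun v => x₀ + v) ⁻¹' K
  have hCconv : Convex ℝ C := hKconv.translate_preimage_right x₀
  have hCball : ball 0 d ⊆ C := fun v hv => hball (by simpa using hv)
  have hCsub : C ⊆ closedBall 0 D := fun v hv => by simpa using hclosedBall hv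
  have hCb : Bornology.IsBounded C := isBounded_closedBall.subset hCsub
  set e := gaugeRescaleEquiv C (ball 0 1) ((absorbent_ball_zero hd).mono hCball)
    (NormedSpace.isVonNBounded_of_isBounded ℝ hCb) (absorbent_ball_zero one_pos)
    (NormedSpace.isVonNBounded_ball ℝ E 1)
  have he : e '' C = ball 0 1 := image_gaugeRescale_unitBall_right hCconv
    (hKopen.preimage (continuous_const_add x₀)) (hCball (mem_ball_self hd)) hCb
  have hC : (fun x => x - x₀) '' K = C :=
    congrFun (Set.image_eq_preimage_of_inverse (g := (x₀ + ·)) (fun _ => by simp)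
      (fun _ => by simp)) K
  have hΦ :=
    (lipschitzWith_gaugeRescale_unitBall_right hCconv hd hCball).const_add_comp_sub_const x₀
  have hΨ :=
    (lipschitzWith_gaugeRescale_unitBall_left hCconv hd hD hCball hCsub).const_add_comp_sub_const x₀
  refine ⟨fun x => x₀ + e (x - x₀), fun y => x₀ + e.symm (y - x₀), fun x => by simp,
    fun y => by simp, ?_, fun r hr => ?_, hΦ, hΨ⟩
  · show x₀ + gaugeRescale C (ball 0 1) (x₀ - x₀) = x₀
    simp
  calc (fun x => x₀ + e (x - x₀)) '' ((fun x => r • (x - x₀) + x₀) '' K)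
      = x₀ +ᵥ r • (e '' ((fun x => x - x₀) '' K)) := by
        simp only [Set.image_image, ← Set.image_smul, ← Set.image_vadd]
        refine Set.image_congr fun x _ => ?_
        simp only [add_sub_cancel_right, vadd_eq_add]
        exact congrArg _ (gaugeRescale_smul _ _ hr.le _)
    _ = ball x₀ r := by rw [hC, he, affinity_unitBall hr]

theorem HasFDerivAt.antilipschitz {E F : Type*} [NormedAddCommGroup E] [NormedSpace ℝ E]
    [NormedAddCommGroup F] [NormedSpace ℝ F] {f : E → F} {f' : E →L[ℝ] F} {x : E} {K : ℝ≥0}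
    (hf : HasFDerivAt f f' x) (hK : AntilipschitzWith K f) : AntilipschitzWith K f' := by
  refine f'.antilipschitz_of_bound fun v => ?_
  have hslope := ((hf.hasLineDerivAt v).tendsto_slope_zero.norm).const_mul (K : ℝ)
  refine ge_of_tendsto hslope (eventually_nhdsWithin_of_forall fun t (ht : t ∈ {0}ᶜ) => ?_)
  have := hK.le_mul_dist (x + t • v) x
  rw [dist_eq_norm, dist_eq_norm, add_sub_cancel_left, norm_smul] at this
  rw [norm_smul, norm_inv, ← mul_assoc, mul_comm (K : ℝ), mul_assoc,
    le_inv_mul_iff₀ (norm_pos_iff.2 (Set.mem_compl_singleton_iff.1 ht))]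
  exact this

section Det

variable {E : Type*} [NormedAddCommGroup E] [NormedSpace ℝ E] [FiniteDimensional ℝ E]

theorem ContinuousLinearMap.abs_det_le_norm_pow (A : E →L[ℝ] E) :
    |A.det| ≤ ‖A‖ ^ finrank ℝ E := by
  let _ : MeasurableSpace E := borel E
  have : BorelSpace E := ⟨rfl⟩
  set μ : Measure E := Measure.addHaar
  have hsub : (A : E →ₗ[ℝ] E) '' closedBall 0 1 ⊆ closedBall 0 ‖A‖ := by
    rintro - ⟨v, hv, rfl⟩
    simpa using A.le_opNorm_of_le (mem_closedBall_zero_iff.1 hv)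
  have hmeas := measure_mono (μ := μ) hsub
  rw [Measure.addHaar_image_linearMap, Measure.addHaar_closedBall' μ _ (norm_nonneg A)] at hmeas
  rw [← ENNReal.ofReal_le_ofReal_iff (by positivity)]
  exact (ENNReal.mul_le_mul_iff_left (measure_closedBall_pos μ 0 one_pos).ne'
    measure_closedBall_lt_top.ne).1 hmeas

theorem AntilipschitzWith.inv_pow_le_abs_det {A : E →L[ℝ] E} {K : ℝ≥0}
    (hA : AntilipschitzWith K A) : ((K : ℝ)⁻¹) ^ finrank ℝ E ≤ |A.det| := by
  set e : E ≃L[ℝ] E :=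
    (LinearEquiv.ofInjectiveEndo (A : E →ₗ[ℝ] E) hA.injective).toContinuousLinearEquiv
  have he : (e : E →L[ℝ] E) = A := rfl
  have hsymm : ‖(e.symm : E →L[ℝ] E)‖ ≤ K := by
    refine ContinuousLinearMap.opNorm_le_bound _ K.2 fun w => ?_
    have h := hA.le_mul_dist (e.symm w) 0
    rwa [map_zero, dist_zero_right, dist_zero_right, ← he, ContinuousLinearEquiv.coe_coe,
      e.apply_symm_apply] at h
  have := (e.symm : E →L[ℝ] E).abs_det_le_norm_pow.trans (pow_le_pow_left₀ (norm_nonneg _) hsymm _)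
  rw [ContinuousLinearEquiv.det_coe_symm, he, abs_inv] at this
  have hdet : A.det ≠ 0 := by
    rw [← he]
    exact (LinearEquiv.isUnit_det' e.toLinearEquiv).ne_zero
  rw [inv_pow]
  exact inv_le_of_inv_le₀ (abs_pos.2 hdet) this

end Det

theorem LipschitzWith.ae_abs_det_fderiv_mem_Icc {E : Type*} [NormedAddCommGroup E]
    [NormedSpace ℝ E] [FiniteDimensional ℝ E] [MeasurableSpace E] [BorelSpace E] {μ : Measure E}
    [μ.IsAddHaarMeasure] {f : E → E} {L M : ℝ≥0} (hL : LipschitzWith L f)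
    (hM : AntilipschitzWith M f) :
    ∀ᵐ x ∂μ,
      |(fderiv ℝ f x).det| ∈ Set.Icc (((M : ℝ)⁻¹) ^ finrank ℝ E) ((L : ℝ) ^ finrank ℝ E) := by
  filter_upwards [hL.ae_differentiableAt] with x hx
  exact ⟨(hx.hasFDerivAt.antilipschitz hM).inv_pow_le_abs_det,
    (fderiv ℝ f x).abs_det_le_norm_pow.trans
      (pow_le_pow_left₀ (norm_nonneg _) (norm_fderiv_le_of_lipschitz ℝ hL) _)⟩

/-- A bi-Lipschitz homeomorphism of `ℝ^N` mapping the dilations of a bounded open convex set `K`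
onto balls, with explicit Lipschitz constants and a.e. two-sided Jacobian bounds. -/
theorem biLipschitz_convex_to_ball (N : ℕ) (hN : 1 ≤ N) (K : Set (Spc N))
    (hKopen : IsOpen K) (hKbdd : Bornology.IsBounded K) (hKconv : Convex ℝ K)
    (x₀ : Spc N) (hx₀ : x₀ ∈ K) :
    ∃ Φ Ψ : Spc N → Spc N,
      Function.LeftInverse Ψ Φ ∧ Function.RightInverse Ψ Φ ∧
      Φ x₀ = x₀ ∧
      (∀ r : ℝ, 0 < r → Φ '' ((fun x => r • (x - x₀) + x₀) '' K) = ball x₀ r) ∧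
      LipschitzWith (Real.toNNReal (2 / dK N K x₀)) Φ ∧
      LipschitzWith (Real.toNNReal (DK N K x₀ * (2 + DK N K x₀ / dK N K x₀))) Ψ ∧
      (∀ᵐ x : Spc N,
        (1 / (DK N K x₀ * (2 + DK N K x₀ / dK N K x₀))) ^ N ≤ |(fderiv ℝ Φ x).det| ∧
        |(fderiv ℝ Φ x).det| ≤ (2 / dK N K x₀) ^ N) ∧
      (∀ᵐ x : Spc N,
        (1 / (2 / dK N K x₀)) ^ N ≤ |(fderiv ℝ Ψ x).det| ∧
        |(fderiv ℝ Ψ x).det| ≤ (DK N K x₀ * (2 + DK N K x₀ / dK N K x₀)) ^ N) := by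
  have : Nontrivial (Spc N) := Module.nontrivial_of_finrank_pos (R := ℝ) (by simp; omega)
  set d := dK N K x₀
  set D := DK N K x₀
  have hd : 0 < d := infDist_frontier_pos hKopen hKbdd hx₀
  have hball : ball x₀ d ⊆ K := ball_infDist_frontier_subset hKopen hx₀
  have hclosedBall : K ⊆ closedBall x₀ D := subset_closedBall_sSup_dist_frontier hKopen hKbdd
  have hD : 0 < D := by
    obtain ⟨w, hw⟩ := exists_norm_eq (Spc N) (half_pos hd).le
    have := hclosedBall (hball (by simpa [hw] : x₀ + w ∈ ball x₀ d))
    simp only [mem_closedBall, dist_self_add_left, hw] at this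
    linarith
  obtain ⟨Φ, Ψ, hleft, hright, hΦx₀, himage, hΦ, hΨ⟩ :=
    hKconv.exists_lipschitzWith_image_eq_ball hKopen hd hD hball hclosedBall
  have hfinrank : finrank ℝ (Spc N) = N := finrank_euclideanSpace_fin
  refine ⟨Φ, Ψ, hleft, hright, hΦx₀, himage, hΦ, hΨ, ?_, ?_⟩
  · filter_upwards [hΦ.ae_abs_det_fderiv_mem_Icc (hΨ.to_rightInverse hleft)] with x hx
    rwa [Real.coe_toNNReal _ (by positivity), Real.coe_toNNReal _ (by positivity), hfinrank,
      ← one_div] at hx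
  · filter_upwards [hΨ.ae_abs_det_fderiv_mem_Icc (hΦ.to_rightInverse hright)] with x hx
    rwa [Real.coe_toNNReal _ (by positivity), Real.coe_toNNReal _ (by positivity), hfinrank,
      ← one_div] at hx
end
end
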